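/- arXiv:1710.04394 — 3 statements merged into one kernel-verified Lean document; each statement's English description precedes it below -/
import Mathlib

section
/- Let X_f be a discrete random variable and S a binary random variable with 0 < P(S=1) < 1. Then any binary decision variable Ŷ_f that is a function of X_f satisfies SP(Ŷ_f, S) ≤ 1 − H_b^{-1}(H(S|X_f)) / max(P(S=1), P(S=0)), where SP(Ŷ_f,S) = P(Ŷ_f=1|S=1) − P(Ŷ_f=1|S=0). -/
/-!
With `Ŷ = g ∘ X_f`, the conditional entropy `H(S|X_f)` is the average over `x` of
`H_b(P(Ŷ ≠ S | X_f = x))`, so concavity of `H_b` bounds it by `H_b(P(Ŷ ≠ S))` (Fano's inequality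
for binary `S`). Since `H_b` increases on `[0, 1/2]`, this gives `H_b⁻¹(H(S|X_f)) ≤ P(Ŷ ≠ S)`.
Finally `P(Ŷ ≠ S) = P(S=0) P(Ŷ=1|S=0) + P(S=1) P(Ŷ=0|S=1) ≤ max(P(S=1), P(S=0)) · 2 BER`, and
`2 BER ≤ 1 - SP`.
-/

open Finset Classical Real

open Classical in
/-- Probability of event `E` under weight function `p` on a finite sample space. -/
noncomputable def Pr {Ω : Type*} [Fintype Ω] (p : Ω → ℝ) (E : Ω → Prop) : ℝ :=
  ∑ ω, if E ω then p ω else 0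

/-- Conditional probability `P(A | B)`. -/
noncomputable def cPr {Ω : Type*} [Fintype Ω] (p : Ω → ℝ) (A B : Ω → Prop) : ℝ :=
  Pr p (fun ω => A ω ∧ B ω) / Pr p B

/-- Statistical parity `SP(Ŷ,S) = P(Ŷ=1|S=1) - P(Ŷ=1|S=0)`. -/
noncomputable def SP {Ω : Type*} [Fintype Ω] (p : Ω → ℝ) (Yhat S : Ω → Bool) : ℝ :=
  cPr p (fun ω => Yhat ω = true) (fun ω => S ω = true)
    - cPr p (fun ω => Yhat ω = true) (fun ω => S ω = false)

/-- Balanced error rate `BER(Ŷ,S) = ½P(Ŷ=1|S=0) + ½P(Ŷ=0|S=1)`. -/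
noncomputable def BER {Ω : Type*} [Fintype Ω] (p : Ω → ℝ) (Yhat S : Ω → Bool) : ℝ :=
  (1/2) * cPr p (fun ω => Yhat ω = true) (fun ω => S ω = false)
    + (1/2) * cPr p (fun ω => Yhat ω = false) (fun ω => S ω = true)

/-- Binary entropy in bits. -/
noncomputable def Hb (q : ℝ) : ℝ :=
  -(q * Real.logb 2 q) - (1 - q) * Real.logb 2 (1 - q)

/-- Conditional entropy `H(S|Z) = E_z[H_b(P(S=1|Z=z))]`. -/
noncomputable def condEnt {Ω 𝒳 : Type*} [Fintype Ω] [Fintype 𝒳] (p : Ω → ℝ)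
    (S : Ω → Bool) (Z : Ω → 𝒳) : ℝ :=
  ∑ z : 𝒳, Pr p (fun ω => Z ω = z) * Hb (cPr p (fun ω => S ω = true) (fun ω => Z ω = z))

/-- The inverse of `H_b` restricted to `[0, 1/2]`. -/
noncomputable def HbInv (y : ℝ) : ℝ :=
  sSup {q : ℝ | q ∈ Set.Icc (0:ℝ) (1/2) ∧ Hb q = y}

lemma Hb_eq_binEntropy_div_log_two (q : ℝ) : Hb q = binEntropy q / log 2 := by
  simp only [Hb, binEntropy, logb, log_inv]
  ring

lemma Hb_one_sub (q : ℝ) : Hb (1 - q) = Hb q := by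
  rw [Hb_eq_binEntropy_div_log_two, Hb_eq_binEntropy_div_log_two, binEntropy_one_sub]

lemma concaveOn_Hb : ConcaveOn ℝ (Set.Icc 0 1) Hb := by
  have h := strictConcave_binEntropy.concaveOn.smul (c := (log 2)⁻¹) (by positivity)
  rwa [show Hb = fun q => (log 2)⁻¹ • binEntropy q from
    funext fun q => by rw [Hb_eq_binEntropy_div_log_two, smul_eq_mul, div_eq_inv_mul]]

lemma Hb_strictMonoOn : StrictMonoOn Hb (Set.Icc 0 (1/2)) := by
  intro a ha b hb hab
  have hI : Set.Icc (0:ℝ) (1/2) = Set.Icc 0 2⁻¹ := by norm_num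
  rw [Hb_eq_binEntropy_div_log_two, Hb_eq_binEntropy_div_log_two]
  exact div_lt_div_of_pos_right (binEntropy_strictMonoOn (hI ▸ ha) (hI ▸ hb) hab)
    (log_pos one_lt_two)

lemma HbInv_le_of_le_Hb {y e : ℝ} (he : 0 ≤ e) (hy : y ≤ Hb e) : HbInv y ≤ e := by
  refine Real.sSup_le (fun u hu => ?_) he
  obtain ⟨hu, huy⟩ := hu
  by_contra! hlt
  have he' : e ∈ Set.Icc (0:ℝ) (1/2) := ⟨he, hlt.le.trans hu.2⟩
  exact (Hb_strictMonoOn he' hu hlt).not_ge (huy ▸ hy)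

section Probability

variable {Ω : Type*} [Fintype Ω] {p : Ω → ℝ}

lemma Pr_congr {E F : Ω → Prop} (h : ∀ ω, E ω ↔ F ω) : Pr p E = Pr p F := by
  rw [show E = F from funext fun ω => propext (h ω)]

lemma Pr_nonneg (hp : ∀ ω, 0 ≤ p ω) (E : Ω → Prop) : 0 ≤ Pr p E :=
  sum_nonneg fun ω _ => by split_ifs <;> simp [hp ω]

lemma Pr_mono (hp : ∀ ω, 0 ≤ p ω) {E F : Ω → Prop} (h : ∀ ω, E ω → F ω) :
    Pr p E ≤ Pr p F :=
  sum_le_sum fun ω _ => by split_ifs <;> simp_all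

lemma Pr_and_add_Pr_not_and (A B : Ω → Prop) :
    Pr p (fun ω => A ω ∧ B ω) + Pr p (fun ω => ¬ A ω ∧ B ω) = Pr p B := by
  simp only [Pr, ← sum_add_distrib]
  exact sum_congr rfl fun ω _ => by by_cases A ω <;> by_cases B ω <;> simp_all

lemma Pr_true_add_Pr_false (S : Ω → Bool) :
    Pr p (fun ω => S ω = true) + Pr p (fun ω => S ω = false) = ∑ ω, p ω := by
  simp only [Pr, ← sum_add_distrib]
  exact sum_congr rfl fun ω _ => by rcases Bool.eq_false_or_eq_true (S ω) with h | h <;> simp [h]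

lemma sum_Pr_and_eq {𝒳 : Type*} [Fintype 𝒳] (A : Ω → Prop) (X : Ω → 𝒳) :
    ∑ x, Pr p (fun ω => A ω ∧ X ω = x) = Pr p A := by
  simp only [Pr]
  rw [sum_comm]
  exact sum_congr rfl fun ω _ => by by_cases A ω <;> simp_all

lemma sum_Pr_eq {𝒳 : Type*} [Fintype 𝒳] (X : Ω → 𝒳) :
    ∑ x, Pr p (fun ω => X ω = x) = ∑ ω, p ω := by
  simp only [Pr]
  rw [sum_comm]
  simp

lemma cPr_congr {A A' B : Ω → Prop} (h : ∀ ω, B ω → (A ω ↔ A' ω)) :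
    cPr p A B = cPr p A' B := by
  rw [cPr, cPr, Pr_congr fun ω => and_congr_left (h ω)]

lemma cPr_nonneg (hp : ∀ ω, 0 ≤ p ω) (A B : Ω → Prop) : 0 ≤ cPr p A B :=
  div_nonneg (Pr_nonneg hp _) (Pr_nonneg hp _)

lemma cPr_le_one (hp : ∀ ω, 0 ≤ p ω) (A B : Ω → Prop) : cPr p A B ≤ 1 :=
  div_le_one_of_le₀ (Pr_mono hp fun _ h => h.2) (Pr_nonneg hp _)

lemma cPr_of_Pr_eq_zero {A B : Ω → Prop} (hB : Pr p B = 0) : cPr p A B = 0 := by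
  rw [cPr, hB, div_zero]

lemma cPr_mul_Pr (hp : ∀ ω, 0 ≤ p ω) (A B : Ω → Prop) :
    cPr p A B * Pr p B = Pr p (fun ω => A ω ∧ B ω) := by
  rcases eq_or_ne (Pr p B) 0 with hB | hB
  · rw [hB, mul_zero]
    exact (le_antisymm (hB ▸ Pr_mono hp fun _ h => h.2) (Pr_nonneg hp _)).symm
  · exact div_mul_cancel₀ _ hB

lemma cPr_not {A B : Ω → Prop} (hB : Pr p B ≠ 0) :
    cPr p (fun ω => ¬ A ω) B = 1 - cPr p A B := by
  rw [eq_sub_iff_add_eq, cPr, cPr, ← add_div, add_comm, Pr_and_add_Pr_not_and,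
    div_self hB]

lemma cPr_add_cPr_not_le_one (A B : Ω → Prop) :
    cPr p A B + cPr p (fun ω => ¬ A ω) B ≤ 1 := by
  rcases eq_or_ne (Pr p B) 0 with hB | hB
  · simp [cPr_of_Pr_eq_zero hB]
  · rw [cPr_not hB]; linarith

lemma Hb_cPr_not (A B : Ω → Prop) : Hb (cPr p (fun ω => ¬ A ω) B) = Hb (cPr p A B) := by
  rcases eq_or_ne (Pr p B) 0 with hB | hB
  · rw [cPr_of_Pr_eq_zero hB, cPr_of_Pr_eq_zero hB]
  · rw [cPr_not hB, Hb_one_sub]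

lemma condEnt_le_Hb_Pr_ne {𝒳 : Type*} [Fintype 𝒳] (hp : ∀ ω, 0 ≤ p ω)
    (hsum : ∑ ω, p ω = 1) (S : Ω → Bool) (X : Ω → 𝒳) (g : 𝒳 → Bool) :
    condEnt p S X ≤ Hb (Pr p (fun ω => g (X ω) ≠ S ω)) := by
  set w : 𝒳 → ℝ := fun x => Pr p (fun ω => X ω = x)
  set e : 𝒳 → ℝ := fun x => cPr p (fun ω => g (X ω) ≠ S ω) (fun ω => X ω = x)
  have hHb : ∀ x, Hb (e x) = Hb (cPr p (fun ω => S ω = true) (fun ω => X ω = x)) := by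
    intro x
    rw [show e x = cPr p (fun ω => g x ≠ S ω) (fun ω => X ω = x) from
      cPr_congr fun ω hω => by rw [hω]]
    cases g x
    · exact congrArg Hb (cPr_congr fun ω _ => by cases S ω <;> simp)
    · rw [← Hb_cPr_not]
      exact congrArg Hb (cPr_congr fun ω _ => by cases S ω <;> simp)
  have hmean : ∑ x, w x • e x = Pr p (fun ω => g (X ω) ≠ S ω) := by
    simp only [smul_eq_mul, w, e, mul_comm (Pr p _), cPr_mul_Pr hp]
    exact sum_Pr_and_eq _ X
  have hjensen := concaveOn_Hb.le_map_sum (t := univ) (w := w) (p := e)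
    (fun x _ => Pr_nonneg hp _) (by rw [sum_Pr_eq, hsum])
    (fun x _ => ⟨cPr_nonneg hp _ _, cPr_le_one hp _ _⟩)
  rw [hmean] at hjensen
  simpa only [condEnt, smul_eq_mul, hHb] using hjensen

lemma Pr_ne_le_two_mul_max_mul_BER (hp : ∀ ω, 0 ≤ p ω) (Yhat S : Ω → Bool) :
    Pr p (fun ω => Yhat ω ≠ S ω) ≤
      2 * max (Pr p (fun ω => S ω = true)) (Pr p (fun ω => S ω = false)) * BER p Yhat S := by
  set m := max (Pr p (fun ω => S ω = true)) (Pr p (fun ω => S ω = false))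
  have hsplit : Pr p (fun ω => Yhat ω ≠ S ω) = Pr p (fun ω => Yhat ω = true ∧ S ω = false)
      + Pr p (fun ω => Yhat ω = false ∧ S ω = true) := by
    simp only [Pr, ← sum_add_distrib]
    exact sum_congr rfl fun ω _ => by
      rcases Bool.eq_false_or_eq_true (Yhat ω) with hY | hY <;>
        rcases Bool.eq_false_or_eq_true (S ω) with hS | hS <;> simp [hY, hS]
  have hα := cPr_nonneg hp (fun ω => Yhat ω = true) (fun ω => S ω = false)
  have hβ := cPr_nonneg hp (fun ω => Yhat ω = false) (fun ω => S ω = true)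
  calc Pr p (fun ω => Yhat ω ≠ S ω)
      = cPr p (fun ω => Yhat ω = true) (fun ω => S ω = false) * Pr p (fun ω => S ω = false)
        + cPr p (fun ω => Yhat ω = false) (fun ω => S ω = true) * Pr p (fun ω => S ω = true) := by
        rw [hsplit, cPr_mul_Pr hp, cPr_mul_Pr hp]
    _ ≤ cPr p (fun ω => Yhat ω = true) (fun ω => S ω = false) * m
        + cPr p (fun ω => Yhat ω = false) (fun ω => S ω = true) * m := by
        gcongr
        exacts [le_max_right _ _, le_max_left _ _]
    _ = 2 * m * BER p Yhat S := by rw [BER]; ring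

lemma two_mul_BER_le_one_sub_SP (Yhat S : Ω → Bool) : 2 * BER p Yhat S ≤ 1 - SP p Yhat S := by
  have h := cPr_add_cPr_not_le_one (p := p) (fun ω => Yhat ω = true) (fun ω => S ω = true)
  simp only [Bool.not_eq_true] at h
  rw [BER, SP]
  linarith

end Probability

theorem stmt4_general {Ω 𝒳 : Type*} [Fintype Ω] [Fintype 𝒳] (p : Ω → ℝ) (hp : ∀ ω, 0 ≤ p ω)
    (hsum : ∑ ω, p ω = 1) (S Yf : Ω → Bool) (Xf : Ω → 𝒳)
    (g : 𝒳 → Bool) (hg : Yf = fun ω => g (Xf ω)) :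
    SP p Yf S ≤ 1 - HbInv (condEnt p S Xf)
      / max (Pr p (fun ω => S ω = true)) (Pr p (fun ω => S ω = false)) := by
  set m := max (Pr p (fun ω => S ω = true)) (Pr p (fun ω => S ω = false))
  have hm : 0 < m := by
    have := Pr_true_add_Pr_false (p := p) S
    have := le_max_left (Pr p (fun ω => S ω = true)) (Pr p (fun ω => S ω = false))
    have := le_max_right (Pr p (fun ω => S ω = true)) (Pr p (fun ω => S ω = false))
    linarith
  have hbound : HbInv (condEnt p S Xf) ≤ (1 - SP p Yf S) * m := calc
    _ ≤ Pr p (fun ω => Yf ω ≠ S ω) :=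
      HbInv_le_of_le_Hb (Pr_nonneg hp _) (hg ▸ condEnt_le_Hb_Pr_ne hp hsum S Xf g)
    _ ≤ 2 * m * BER p Yf S := Pr_ne_le_two_mul_max_mul_BER hp Yf S
    _ = 2 * BER p Yf S * m := by ring
    _ ≤ (1 - SP p Yf S) * m := by gcongr; exact two_mul_BER_le_one_sub_SP Yf S
  rw [le_sub_comm]
  exact (div_le_iff₀ hm).2 hbound

/-- for any decision `Ŷ_f` that is a function of `X_f`,
`SP(Ŷ_f,S) ≤ 1 - H_b⁻¹(H(S|X_f)) / max(P(S=1), P(S=0))`. -/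
theorem stmt4 {Ω 𝒳 : Type*} [Fintype Ω] [Fintype 𝒳] (p : Ω → ℝ) (hp : ∀ ω, 0 ≤ p ω)
    (hsum : ∑ ω, p ω = 1) (S Yf : Ω → Bool) (Xf : Ω → 𝒳)
    (g : 𝒳 → Bool) (hg : Yf = fun ω => g (Xf ω))
    (hS1 : 0 < Pr p (fun ω => S ω = true)) (hS1' : Pr p (fun ω => S ω = true) < 1)
    (hSPnn : 0 ≤ SP p Yf S) :
    SP p Yf S ≤ 1 - HbInv (condEnt p S Xf)
      / max (Pr p (fun ω => S ω = true)) (Pr p (fun ω => S ω = false)) :=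
  stmt4_general p hp hsum S Yf Xf g hg
end

section
/- The combined risk R_{YS}(Ŷ) = R_Y(Ŷ) − λ·R_S(Ŷ) over decision rules q : 𝒳 → [0,1] with P(Ŷ=1|X=x)=q(x) is minimized by the deterministic rule Ŷ*(x) = 1[P(Y=1|X=x) − c_Y > λ(P(S=1|X=x) − c_S)], and the minimum value equals E_x[(c_Y − P(Y=1|X=x) − λ(c_S − P(S=1|X=x)))·Ŷ*(x)] + (1−c_Y)P(Y=1) − λ(1−c_S)P(S=1). -/
open Finset Classical Real

open Classical in
/-- Cost-sensitive risk of the (randomized) decision rule `q`, where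
`P(Ŷ=1|X=x) = q(x)` and `Ŷ` is conditionally independent of the label given `X`:
`R(q) = c·P(L=0)·P(Ŷ=1|L=0) + (1-c)·P(L=1)·P(Ŷ=0|L=1)`. -/
noncomputable def ruleRisk {Ω 𝒳 : Type*} [Fintype Ω] (p : Ω → ℝ) (L : Ω → Bool)
    (X : Ω → 𝒳) (q : 𝒳 → ℝ) (c : ℝ) : ℝ :=
  c * Pr p (fun ω => L ω = false)
      * ((∑ ω, if L ω = false then p ω * q (X ω) else 0) / Pr p (fun ω => L ω = false))
    + (1 - c) * Pr p (fun ω => L ω = true)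
      * ((∑ ω, if L ω = true then p ω * (1 - q (X ω)) else 0) / Pr p (fun ω => L ω = true))

/-- Combined risk `R_{YS}(q) = R_Y(q) - λ·R_S(q)`. -/
noncomputable def combRisk {Ω 𝒳 : Type*} [Fintype Ω] (p : Ω → ℝ) (Y S : Ω → Bool)
    (X : Ω → 𝒳) (q : 𝒳 → ℝ) (cY cS lam : ℝ) : ℝ :=
  ruleRisk p Y X q cY - lam * ruleRisk p S X q cS

lemma Pr_zero_fiber {Ω : Type*} [Fintype Ω] (p : Ω → ℝ) (hp : ∀ ω, 0 ≤ p ω)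
    (E : Ω → Prop) (h : Pr p E = 0) : ∀ ω, E ω → p ω = 0 := by
  intro ω hω
  have h2 := (Finset.sum_eq_zero_iff_of_nonneg
    (fun ω _ => by split <;> simp [hp ω])).mp h ω (Finset.mem_univ ω)
  simpa [hω] using h2

lemma mul_cPr {Ω : Type*} [Fintype Ω] (p : Ω → ℝ) (hp : ∀ ω, 0 ≤ p ω)
    (A B : Ω → Prop) : Pr p B * cPr p A B = Pr p (fun ω => A ω ∧ B ω) := by
  unfold cPr
  by_cases hB : Pr p B = 0
  · rw [hB]
    simp only [zero_mul]
    symm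
    apply Finset.sum_eq_zero
    intro ω _
    split
    · next hab => exact Pr_zero_fiber p hp B hB ω hab.2
    · rfl
  · field_simp

lemma cancel_div {Ω : Type*} [Fintype Ω] (p : Ω → ℝ) (E : Ω → Prop) (A : ℝ)
    (hA : Pr p E = 0 → A = 0) : Pr p E * (A / Pr p E) = A := by
  by_cases hE : Pr p E = 0
  · simp [hE, hA hE]
  · field_simp

lemma ruleRisk_eq {Ω 𝒳 : Type*} [Fintype Ω] (p : Ω → ℝ) (hp : ∀ ω, 0 ≤ p ω)
    (X : Ω → 𝒳) (L : Ω → Bool) (q : 𝒳 → ℝ) (c : ℝ) :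
    ruleRisk p L X q c
      = (∑ ω, p ω * q (X ω) * (c - (if L ω = true then 1 else 0)))
        + (1 - c) * Pr p (fun ω => L ω = true) := by
  unfold ruleRisk
  have h1 : (Pr p fun ω => L ω = false)
      * ((∑ ω, if L ω = false then p ω * q (X ω) else 0) / Pr p fun ω => L ω = false)
      = ∑ ω, if L ω = false then p ω * q (X ω) else 0 := by
    apply cancel_div
    intro h0
    refine Finset.sum_eq_zero fun ω _ => ?_
    split
    · next hE => rw [Pr_zero_fiber p hp _ h0 ω hE]; ring
    · rfl
  have h2 : (Pr p fun ω => L ω = true)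
      * ((∑ ω, if L ω = true then p ω * (1 - q (X ω)) else 0) / Pr p fun ω => L ω = true)
      = ∑ ω, if L ω = true then p ω * (1 - q (X ω)) else 0 := by
    apply cancel_div
    intro h0
    refine Finset.sum_eq_zero fun ω _ => ?_
    split
    · next hE => rw [Pr_zero_fiber p hp _ h0 ω hE]; ring
    · rfl
  rw [mul_assoc, mul_assoc, h1, h2]
  unfold Pr
  rw [Finset.mul_sum, Finset.mul_sum, Finset.mul_sum, ← Finset.sum_add_distrib,
    ← Finset.sum_add_distrib]
  apply Finset.sum_congr rfl
  intro ω _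
  cases hL : L ω <;> simp [hL] <;> ring

lemma fiber_eq {Ω 𝒳 : Type*} [Fintype Ω] [Fintype 𝒳] (X : Ω → 𝒳)
    (f : Ω → ℝ) (r : 𝒳 → ℝ) :
    ∑ x : 𝒳, r x * (∑ ω, if X ω = x then f ω else 0) = ∑ ω, f ω * r (X ω) := by
  simp only [Finset.mul_sum]
  rw [Finset.sum_comm]
  apply Finset.sum_congr rfl
  intro ω _
  rw [Finset.sum_eq_single (X ω)]
  · simp [mul_comm]
  · intro b _ hb
    have : ¬ (X ω = b) := fun h => hb h.symm
    simp [this]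
  · simp

lemma combRisk_eq {Ω 𝒳 : Type*} [Fintype Ω] [Fintype 𝒳] (p : Ω → ℝ)
    (hp : ∀ ω, 0 ≤ p ω) (X : Ω → 𝒳) (Y S : Ω → Bool) (q : 𝒳 → ℝ) (cY cS lam : ℝ) :
    combRisk p Y S X q cY cS lam
      = (∑ x : 𝒳, Pr p (fun ω => X ω = x)
          * ((cY - cPr p (fun ω => Y ω = true) (fun ω => X ω = x)
              - lam * (cS - cPr p (fun ω => S ω = true) (fun ω => X ω = x))) * q x))
        + (1 - cY) * Pr p (fun ω => Y ω = true)
        - lam * (1 - cS) * Pr p (fun ω => S ω = true) := by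
  have hx : ∀ x : 𝒳, Pr p (fun ω => X ω = x)
      * ((cY - cPr p (fun ω => Y ω = true) (fun ω => X ω = x)
          - lam * (cS - cPr p (fun ω => S ω = true) (fun ω => X ω = x))) * q x)
      = q x * (∑ ω, if X ω = x then
          p ω * (cY - (if Y ω = true then 1 else 0)
            - lam * (cS - (if S ω = true then 1 else 0))) else 0) := by
    intro x
    have hY := mul_cPr p hp (fun ω => Y ω = true) (fun ω => X ω = x)
    have hS := mul_cPr p hp (fun ω => S ω = true) (fun ω => X ω = x)
    have hfib : (∑ ω, if X ω = x then
          p ω * (cY - (if Y ω = true then 1 else 0)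
            - lam * (cS - (if S ω = true then 1 else 0))) else 0)
        = cY * Pr p (fun ω => X ω = x) - Pr p (fun ω => Y ω = true ∧ X ω = x)
          - lam * (cS * Pr p (fun ω => X ω = x)
              - Pr p (fun ω => S ω = true ∧ X ω = x)) := by
      unfold Pr
      simp only [Finset.mul_sum, ← Finset.sum_sub_distrib]
      apply Finset.sum_congr rfl
      intro ω _
      split_ifs <;> simp_all <;> ring
    rw [hfib, ← hY, ← hS]
    ring
  rw [Finset.sum_congr rfl (fun x _ => hx x)]
  rw [fiber_eq X (fun ω => p ω * (cY - (if Y ω = true then 1 else 0)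
      - lam * (cS - (if S ω = true then 1 else 0)))) q]
  unfold combRisk
  rw [ruleRisk_eq p hp X Y q cY, ruleRisk_eq p hp X S q cS]
  have hmain : (∑ ω, p ω * q (X ω) * (cY - (if Y ω = true then 1 else 0)))
      - lam * (∑ ω, p ω * q (X ω) * (cS - (if S ω = true then 1 else 0)))
      = ∑ ω, (p ω * (cY - (if Y ω = true then 1 else 0)
          - lam * (cS - (if S ω = true then 1 else 0)))) * q (X ω) := by
    rw [Finset.mul_sum, ← Finset.sum_sub_distrib]
    exact Finset.sum_congr rfl fun ω _ => by ring
  linarith [hmain]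

/-- `R_{YS}` is minimized over decision rules `q : 𝒳 → [0,1]` by
the deterministic rule `Ŷ*(x) = 1[P(Y=1|X=x) - c_Y > λ(P(S=1|X=x) - c_S)]`, and
the minimum equals
`E_x[(c_Y - P(Y=1|X=x) - λ(c_S - P(S=1|X=x)))·Ŷ*(x)] + (1-c_Y)P(Y=1) - λ(1-c_S)P(S=1)`. -/
theorem stmt11 {Ω 𝒳 : Type*} [Fintype Ω] [Fintype 𝒳] (p : Ω → ℝ) (hp : ∀ ω, 0 ≤ p ω)
    (hsum : ∑ ω, p ω = 1) (X : Ω → 𝒳) (Y S : Ω → Bool)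
    (cY cS lam : ℝ) (hcY : cY ∈ Set.Icc (0:ℝ) 1) (hcS : cS ∈ Set.Icc (0:ℝ) 1)
    (hlam : 0 ≤ lam)
    (etaY etaS : 𝒳 → ℝ)
    (hetaY : etaY = fun x => cPr p (fun ω => Y ω = true) (fun ω => X ω = x))
    (hetaS : etaS = fun x => cPr p (fun ω => S ω = true) (fun ω => X ω = x))
    (ystar : 𝒳 → ℝ)
    (hystar : ystar = fun x => if lam * (etaS x - cS) < etaY x - cY then 1 else 0) :
    (∀ q : 𝒳 → ℝ, (∀ x, q x ∈ Set.Icc (0:ℝ) 1) →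
      combRisk p Y S X ystar cY cS lam ≤ combRisk p Y S X q cY cS lam) ∧
    combRisk p Y S X ystar cY cS lam
      = (∑ x : 𝒳, Pr p (fun ω => X ω = x)
          * ((cY - etaY x - lam * (cS - etaS x)) * ystar x))
        + (1 - cY) * Pr p (fun ω => Y ω = true)
        - lam * (1 - cS) * Pr p (fun ω => S ω = true) := by
  have hEq : ∀ q : 𝒳 → ℝ, combRisk p Y S X q cY cS lam
      = (∑ x : 𝒳, Pr p (fun ω => X ω = x)
          * ((cY - etaY x - lam * (cS - etaS x)) * q x))
        + (1 - cY) * Pr p (fun ω => Y ω = true)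
        - lam * (1 - cS) * Pr p (fun ω => S ω = true) := by
    intro q
    rw [combRisk_eq p hp X Y S q cY cS lam]
    simp only [hetaY, hetaS]
  refine ⟨?_, hEq ystar⟩
  intro q hq
  rw [hEq q, hEq ystar]
  have hsumle : (∑ x : 𝒳, Pr p (fun ω => X ω = x)
        * ((cY - etaY x - lam * (cS - etaS x)) * ystar x))
      ≤ ∑ x : 𝒳, Pr p (fun ω => X ω = x)
        * ((cY - etaY x - lam * (cS - etaS x)) * q x) := by
    apply Finset.sum_le_sum
    intro x _
    have hPr : 0 ≤ Pr p (fun ω => X ω = x) :=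
      Finset.sum_nonneg fun ω _ => by split <;> simp [hp ω]
    apply mul_le_mul_of_nonneg_left _ hPr
    have hq0 := (hq x).1
    have hq1 := (hq x).2
    rw [hystar]
    by_cases h : lam * (etaS x - cS) < etaY x - cY
    · simp only [h, if_true]
      nlinarith
    · simp only [h, if_false]
      push_neg at h
      nlinarith
  linarith
end

section
/- Let D be a metric on [0,1] and let Ŷ be D,d individually fair with respect to X. If Ŷ_f is defined via P(Ŷ_f=1|X=x) = P(Ŷ=1|X=f(x)) and the reconstruction error satisfies d(x,f(x)) ≤ ε for all x in the support of X, then Ŷ_f is D, d_{2ε} individually fair with respect to X, where d_{2ε}(x,x') := d(x,x') + 2ε. -/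
open Finset Classical Real

/-- if `Ŷ` is `D,d` individually fair w.r.t. `X` (decision
probability `pfun x = P(Ŷ=1|X=x)`) and `d(x, f(x)) ≤ ε` for all `x` in the
support of `X`, then `Ŷ_f` (decision probability `x ↦ pfun (f x)`) is
`D, d + 2ε` individually fair w.r.t. `X`. -/
theorem stmt19 {Ω 𝒳 : Type*} [Fintype Ω] (p : Ω → ℝ) (hp : ∀ ω, 0 ≤ p ω)
    (hsum : ∑ ω, p ω = 1) (X : Ω → 𝒳)
    (d : 𝒳 → 𝒳 → ℝ) (D : ℝ → ℝ → ℝ)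
    (hDtri : ∀ a b c, D a c ≤ D a b + D b c) (hDsymm : ∀ a b, D a b = D b a)
    (pfun : 𝒳 → ℝ) (hfair : ∀ x x', D (pfun x) (pfun x') ≤ d x x')
    (f : 𝒳 → 𝒳) (ε : ℝ) (hε : 0 ≤ ε)
    (hrec : ∀ x : 𝒳, 0 < Pr p (fun ω => X ω = x) → d x (f x) ≤ ε) :
    ∀ x x' : 𝒳, 0 < Pr p (fun ω => X ω = x) → 0 < Pr p (fun ω => X ω = x') →
      D (pfun (f x)) (pfun (f x')) ≤ d x x' + 2 * ε := by
  intro x x' hx hx'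
  have h1 : D (pfun (f x)) (pfun (f x')) ≤
      D (pfun (f x)) (pfun x) + D (pfun x) (pfun x') + D (pfun x') (pfun (f x')) := by
    calc D (pfun (f x)) (pfun (f x')) ≤ D (pfun (f x)) (pfun x') + D (pfun x') (pfun (f x')) :=
          hDtri _ _ _
      _ ≤ D (pfun (f x)) (pfun x) + D (pfun x) (pfun x') + D (pfun x') (pfun (f x')) := by
          have := hDtri (pfun (f x)) (pfun x) (pfun x'); linarith
  have h2 : D (pfun (f x)) (pfun x) ≤ ε := by
    rw [hDsymm]; exact (hfair x (f x)).trans (hrec x hx)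
  have h3 : D (pfun x') (pfun (f x')) ≤ ε := (hfair x' (f x')).trans (hrec x' hx')
  have h4 : D (pfun x) (pfun x') ≤ d x x' := hfair x x'
  linarith
end
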